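/- The function G₄(ρ, v, m) := −(v + m) · (v − (0, 1−ρ)) + |v + m|²/2 is Λ-convex and vanishes on K. -/

import Mathlib

open MeasureTheory

noncomputable section

/-- Euclidean dot product on ℝ². -/
def dot (a b : ℝ × ℝ) : ℝ := a.1 * b.1 + a.2 * b.2

/-- Rotation by 90°: (a,b)⊥ = (−b, a). -/
def perp (a : ℝ × ℝ) : ℝ × ℝ := (-a.2, a.1)

/-- Euclidean norm on ℝ². -/
def nrm (a : ℝ × ℝ) : ℝ := Real.sqrt (a.1 ^ 2 + a.2 ^ 2)

/-- State space ℝ × ℝ² × ℝ² of (ρ, v, m). -/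
abbrev Pt := ℝ × (ℝ × ℝ) × (ℝ × ℝ)

/-- The wave cone Λ of stationary IPM. -/
def Lam : Set Pt :=
  {z | dot z.2.1 z.2.1 + z.1 * z.2.1.2 = 0 ∧ dot z.2.2 (perp z.2.1) = 0 ∧
       dot z.2.2 (z.2.1 + (0, z.1)) = 0}

/-- The constitutive set K. -/
def Kset : Set Pt := {z | |z.1| = 1 ∧ z.2.2 = z.1 • z.2.1}

def G2 (z : Pt) : ℝ := dot z.2.2 (perp z.2.1)

def G3 (z : Pt) : ℝ :=
  -dot (z.2.1 - z.2.2) (z.2.1 + (0, 1 + z.1)) + dot (z.2.1 - z.2.2) (z.2.1 - z.2.2) / 2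

def G4 (z : Pt) : ℝ :=
  -dot (z.2.1 + z.2.2) (z.2.1 - (0, 1 - z.1)) + dot (z.2.1 + z.2.2) (z.2.1 + z.2.2) / 2


/-!
Along a direction `z = (q, w, n)` the function `t ↦ G4 (z₀ + t • z)` is a quadratic polynomial
whose leading coefficient is the quadratic part of `G4` at `z`,
`-(w + n) · (w + (0, q)) + |w + n|² / 2`. The first and third wave-cone relations say exactly that
`(w + n) · (w + (0, q)) = 0`, so on `Λ` the leading coefficient is `|w + n|² / 2 ≥ 0`.
On `K` we have `ρ² = 1` and `m = ρ v`, so `v + m = (1 + ρ) v`, and `G4` is a multiple of `1 - ρ²`.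
-/

lemma convexOn_univ_quadratic {a : ℝ} (ha : 0 ≤ a) (b c : ℝ) :
    ConvexOn ℝ Set.univ (fun t : ℝ => a * t ^ 2 + b * t + c) :=
  (((even_two.convexOn_pow).smul ha).add ((LinearMap.mul ℝ ℝ b).convexOn convex_univ)).add_const c

lemma dot_self_nonneg (a : ℝ × ℝ) : 0 ≤ dot a a :=
  add_nonneg (mul_self_nonneg _) (mul_self_nonneg _)

lemma G4_add_smul_of_mem_Lam (z₀ : Pt) {z : Pt} (hz : z ∈ Lam) (t : ℝ) :
    G4 (z₀ + t • z) =
      dot (z.2.1 + z.2.2) (z.2.1 + z.2.2) / 2 * t ^ 2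
        + (G4 (z₀ + z) - G4 z₀ - dot (z.2.1 + z.2.2) (z.2.1 + z.2.2) / 2) * t + G4 z₀ := by
  obtain ⟨ρ₀, ⟨v₁, v₂⟩, m₁, m₂⟩ := z₀
  obtain ⟨ρ, ⟨w₁, w₂⟩, n₁, n₂⟩ := z
  obtain ⟨hw, -, hn⟩ := hz
  simp only [G4, dot, Prod.mk_add_mk, Prod.mk_sub_mk, Prod.smul_mk, smul_eq_mul] at hw hn ⊢
  linear_combination (t - t ^ 2) * (hw + hn)

lemma G4_eq_zero_of_mem_Kset {z : Pt} (hz : z ∈ Kset) : G4 z = 0 := by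
  obtain ⟨ρ, ⟨v₁, v₂⟩, m₁, m₂⟩ := z
  obtain ⟨hρ, hm⟩ := hz
  have hρ_sq : ρ ^ 2 = 1 := by rw [← sq_abs, hρ, one_pow]
  simp only [Prod.smul_mk, smul_eq_mul, Prod.mk.injEq] at hm
  obtain ⟨rfl, rfl⟩ := hm
  simp only [G4, dot, Prod.mk_add_mk, Prod.mk_sub_mk]
  linear_combination ((v₁ ^ 2 + v₂ ^ 2) / 2 - v₂) * hρ_sq

theorem stmt5 :
    (∀ z₀ : Pt, ∀ z ∈ Lam, ConvexOn ℝ Set.univ (fun t : ℝ => G4 (z₀ + t • z))) ∧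
    (∀ z ∈ Kset, G4 z = 0) := by
  refine ⟨fun z₀ z hz => ?_, fun z hz => G4_eq_zero_of_mem_Kset hz⟩
  simp only [G4_add_smul_of_mem_Lam z₀ hz]
  exact convexOn_univ_quadratic (div_nonneg (dot_self_nonneg _) zero_le_two) _ _
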